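/- arXiv:2104.13511 — 4 statements merged into one kernel-verified Lean document; each statement's English description precedes it below -/
import Mathlib

section
/- Let A, B : ℕ → Bool (identified with subsets of ℕ). If A is not Turing reducible to B, then there exists a set S ⊆ ℕ such that S is Turing reducible to A, S is infinite, and S is B-immune, i.e., no infinite subset of S is Turing reducible to B. -/
/-- Partial recursiveness relative to an oracle `O : ℕ → ℕ`: the least class containing
the basic functions and the oracle, closed under pairing, composition, primitive
recursion, and unbounded search.  (This mirrors Mathlib's `Nat.Partrec`, with the extra
`oracle` constructor.) -/
inductive OrRecursiveIn (O : ℕ → ℕ) : (ℕ →. ℕ) → Prop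
  | zero : OrRecursiveIn O (pure 0)
  | succ : OrRecursiveIn O Nat.succ
  | left : OrRecursiveIn O ↑fun n : ℕ => n.unpair.1
  | right : OrRecursiveIn O ↑fun n : ℕ => n.unpair.2
  | oracle : OrRecursiveIn O ↑O
  | pair {f g} : OrRecursiveIn O f → OrRecursiveIn O g →
      OrRecursiveIn O fun n => Nat.pair <$> f n <*> g n
  | comp {f g} : OrRecursiveIn O f → OrRecursiveIn O g → OrRecursiveIn O fun n => g n >>= f
  | prec {f g} : OrRecursiveIn O f → OrRecursiveIn O g →
      OrRecursiveIn O (Nat.unpaired fun a n =>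
        n.rec (f a) fun y IH => do let i ← IH; g (Nat.pair a (Nat.pair y i)))
  | rfind {f} : OrRecursiveIn O f →
      OrRecursiveIn O fun a => Nat.rfind fun n => (fun m => m = 0) <$> f (Nat.pair a n)

/-- `X` is Turing reducible to `Y` (`X ≤_T Y`): the characteristic function of `X`
(as a total partial function) is recursive in an oracle for the characteristic
function of `Y`. -/
def SetTuringReducible (X Y : Set ℕ) : Prop :=
  OrRecursiveIn (Y.indicator 1) fun n => Part.some (X.indicator 1 n)

/-!
Take `S` to be the set of codes `⟨n, A ↾ n⟩` of the finite initial segments of `A`; it is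
computable from `A`. Conversely any infinite `C ⊆ S` computes `A`: to get `A a`, search `C` for
the code of a segment of length greater than `a` and read off its `a`-th bit. Hence an infinite
`C ≤_T B` would give `A ≤_T B`.
-/

open Finset

theorem Primrec.nat_pow : Primrec₂ ((· ^ ·) : ℕ → ℕ → ℕ) :=
  Primrec₂.unpaired'.mp Nat.Primrec.pow

def OrComputableIn (O f : ℕ → ℕ) : Prop :=
  OrRecursiveIn O fun n => Part.some (f n)

namespace OrRecursiveIn

theorem of_partrec {O : ℕ → ℕ} {f : ℕ →. ℕ} (hf : Nat.Partrec f) :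
    OrRecursiveIn O f := by
  induction hf with
  | zero => exact .zero
  | succ => exact .succ
  | left => exact .left
  | right => exact .right
  | pair _ _ ihf ihg => exact .pair ihf ihg
  | comp _ _ ihf ihg => exact .comp ihf ihg
  | prec _ _ ihf ihg => exact .prec ihf ihg
  | rfind _ ihf => exact .rfind ihf

theorem subst {O O' : ℕ → ℕ} {f : ℕ →. ℕ} (hf : OrRecursiveIn O f)
    (hO : OrRecursiveIn O' fun n => Part.some (O n)) : OrRecursiveIn O' f := by
  induction hf with
  | zero => exact .zero
  | succ => exact .succ
  | left => exact .left
  | right => exact .right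
  | oracle => exact hO
  | pair _ _ ihf ihg => exact .pair ihf ihg
  | comp _ _ ihf ihg => exact .comp ihf ihg
  | prec _ _ ihf ihg => exact .prec ihf ihg
  | rfind _ ihf => exact .rfind ihf

end OrRecursiveIn

namespace OrComputableIn

variable {O f g : ℕ → ℕ}

theorem of_primrec (hf : Primrec f) : OrComputableIn O f :=
  OrRecursiveIn.of_partrec (Nat.Partrec.of_primrec (Primrec.nat_iff.mp hf))

theorem oracle : OrComputableIn O O := OrRecursiveIn.oracle

theorem trans {O' : ℕ → ℕ} (hf : OrComputableIn O f) (hO : OrComputableIn O' O) :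
    OrComputableIn O' f :=
  OrRecursiveIn.subst hf hO

theorem comp (hf : OrComputableIn O f) (hg : OrComputableIn O g) : OrComputableIn O (f ∘ g) := by
  simpa [OrComputableIn] using OrRecursiveIn.comp hf hg

theorem pair (hf : OrComputableIn O f) (hg : OrComputableIn O g) :
    OrComputableIn O fun n => Nat.pair (f n) (g n) := by
  simpa [OrComputableIn, Seq.seq] using OrRecursiveIn.pair hf hg

theorem comp₂ {h : ℕ → ℕ → ℕ} (hh : Primrec₂ h) (hf : OrComputableIn O f)
    (hg : OrComputableIn O g) : OrComputableIn O fun n => h (f n) (g n) := by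
  have hh' : Primrec fun p : ℕ => h p.unpair.1 p.unpair.2 :=
    hh.comp (Primrec.fst.comp Primrec.unpair) (Primrec.snd.comp Primrec.unpair)
  simpa [Function.comp_def] using (of_primrec hh').comp (hf.pair hg)

theorem of_succ {h : ℕ → ℕ → ℕ} (hh : OrComputableIn O fun p => h p.unpair.1 p.unpair.2)
    {f : ℕ → ℕ} (hs : ∀ n, f (n + 1) = h n (f n)) : OrComputableIn O f := by
  have hstep : OrComputableIn O fun q => h q.unpair.2.unpair.1 q.unpair.2.unpair.2 :=
    hh.comp (g := fun q => q.unpair.2) (of_primrec (Primrec.snd.comp Primrec.unpair))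
  have hrec := (OrRecursiveIn.prec (of_primrec (f := fun _ => f 0) (Primrec.const _)) hstep).comp
    (of_primrec (f := fun n => Nat.pair 0 n) (Primrec₂.natPair.comp (Primrec.const 0) Primrec.id))
  have hval : ∀ n, Nat.rec (motive := fun _ => Part ℕ) (Part.some (f 0))
      (fun y IH => IH.bind fun i => Part.some (h y i)) n = Part.some (f n) := by
    intro n
    induction n with
    | zero => rfl
    | succ n ih => exact (congrArg (Part.bind · _) ih).trans (by simp [hs])
  simpa [OrComputableIn, Nat.unpaired, hval] using hrec

theorem find (hf : OrComputableIn O f) (H : ∀ a, ∃ n, f (Nat.pair a n) = 0) :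
    OrComputableIn O fun a => Nat.find (H a) := by
  have hval : ∀ a, Nat.rfind (fun n => Part.some (decide (f (Nat.pair a n) = 0)))
      = Part.some (Nat.find (H a)) := by
    intro a
    refine Part.eq_some_iff.2 (Nat.mem_rfind.2 ⟨?_, fun hm => ?_⟩)
    · simp [Nat.find_spec (H a)]
    · simp [Nat.find_min (H a) hm]
  simpa [OrComputableIn, hval] using OrRecursiveIn.rfind hf

end OrComputableIn

theorem SetTuringReducible.trans {X Y Z : Set ℕ} (hXY : SetTuringReducible X Y)
    (hYZ : SetTuringReducible Y Z) : SetTuringReducible X Z :=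
  OrComputableIn.trans hXY hYZ

open scoped Classical in
noncomputable def initSegCode (X : Set ℕ) (n : ℕ) : ℕ := ∑ i ∈ range n with i ∈ X, 2 ^ i

theorem initSegCode_succ (X : Set ℕ) (n : ℕ) :
    initSegCode X (n + 1) = initSegCode X n + 2 ^ n * X.indicator 1 n := by
  simp only [initSegCode, sum_filter, sum_range_succ]
  by_cases hn : n ∈ X <;> simp [hn]

theorem testBit_initSegCode (X : Set ℕ) (n i : ℕ) :
    (initSegCode X n).testBit i ↔ i < n ∧ i ∈ X := by
  classical
  rw [initSegCode, ← Nat.mem_bitIndices, ← List.mem_toFinset,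
    Finset.toFinset_bitIndices_sum_two_pow, mem_filter, mem_range]

theorem indicator_eq_initSegCode_div {X : Set ℕ} {i n : ℕ} (hi : i < n) :
    X.indicator 1 i = initSegCode X n / 2 ^ i % 2 := by
  have hbit := testBit_initSegCode X n i
  rw [← Nat.toNat_testBit]
  by_cases hX : i ∈ X
  · simp [hX, hbit.2 ⟨hi, hX⟩]
  · simp [hX, Bool.eq_false_iff.2 fun h => hX (hbit.1 h).2]

theorem orComputableIn_initSegCode (X : Set ℕ) :
    OrComputableIn (X.indicator 1) (initSegCode X) := by
  have hstep : Primrec₂ fun (p : ℕ) (b : ℕ) => p.unpair.2 + 2 ^ p.unpair.1 * b :=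
    Primrec.nat_add.comp (Primrec.snd.comp (Primrec.unpair.comp Primrec.fst))
      (Primrec.nat_mul.comp (Primrec.nat_pow.comp (Primrec.const 2)
        (Primrec.fst.comp (Primrec.unpair.comp Primrec.fst))) Primrec.snd)
  have hh : OrComputableIn (X.indicator 1)
      fun p => p.unpair.2 + 2 ^ p.unpair.1 * X.indicator 1 p.unpair.1 :=
    (OrComputableIn.comp₂ hstep (.of_primrec Primrec.id)
      (OrComputableIn.oracle.comp (.of_primrec (Primrec.fst.comp Primrec.unpair))) :)
  exact .of_succ (h := fun n c => c + 2 ^ n * X.indicator 1 n) hh (initSegCode_succ X)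

def initSegs (X : Set ℕ) : Set ℕ := Set.range fun n => Nat.pair n (initSegCode X n)

theorem mem_initSegs_iff {X : Set ℕ} {m : ℕ} :
    m ∈ initSegs X ↔ m = Nat.pair m.unpair.1 (initSegCode X m.unpair.1) := by
  constructor
  · rintro ⟨n, rfl⟩
    simp
  · exact fun h => ⟨_, h.symm⟩

theorem injOn_unpair_fst_initSegs (X : Set ℕ) :
    Set.InjOn (fun m => m.unpair.1) (initSegs X) := by
  intro x hx y hy hxy
  rw [mem_initSegs_iff.1 hx, mem_initSegs_iff.1 hy]
  simp only at hxy
  rw [hxy]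

theorem initSegs_infinite (X : Set ℕ) : (initSegs X).Infinite :=
  Set.infinite_range_of_injective fun a b hab => by simpa using congrArg (·.unpair.1) hab

theorem setTuringReducible_initSegs (X : Set ℕ) : SetTuringReducible (initSegs X) X := by
  classical
  have hχ : (initSegs X).indicator 1 =
      fun m => if m = Nat.pair m.unpair.1 (initSegCode X m.unpair.1) then 1 else 0 := by
    funext m
    simp [Set.indicator_apply, mem_initSegs_iff]
  have htest : Primrec₂ fun (m c : ℕ) => if m = Nat.pair m.unpair.1 c then 1 else 0 :=
    Primrec.ite (Primrec.eq.comp Primrec.fst (Primrec₂.natPair.comp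
      (Primrec.fst.comp (Primrec.unpair.comp Primrec.fst)) Primrec.snd))
      (Primrec.const 1) (Primrec.const 0)
  change OrComputableIn _ _
  rw [hχ]
  exact .comp₂ htest (.of_primrec Primrec.id)
    ((orComputableIn_initSegCode X).comp (.of_primrec (Primrec.fst.comp Primrec.unpair)))

theorem indicator_eq_of_mem_initSegs {X : Set ℕ} {m a : ℕ} (hm : m ∈ initSegs X)
    (ha : a < m.unpair.1) : X.indicator 1 a = m.unpair.2 / 2 ^ a % 2 := by
  obtain ⟨t, rfl⟩ := hm
  simp only [Nat.unpair_pair] at ha ⊢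
  exact indicator_eq_initSegCode_div ha

theorem exists_mem_lt_unpair_fst_of_subset_initSegs {X C : Set ℕ} (hC : C ⊆ initSegs X)
    (hinf : C.Infinite) (a : ℕ) : ∃ m ∈ C, a < m.unpair.1 := by
  obtain ⟨_, ⟨m, hm, rfl⟩, ha⟩ :=
    (hinf.image ((injOn_unpair_fst_initSegs X).mono hC)).exists_gt a
  exact ⟨m, hm, ha⟩

theorem setTuringReducible_of_subset_initSegs {X C : Set ℕ} (hC : C ⊆ initSegs X)
    (hinf : C.Infinite) : SetTuringReducible X C := by
  classical
  set O : ℕ → ℕ := C.indicator 1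
  let test (q : ℕ) : ℕ := if O q.unpair.2 = 1 ∧ q.unpair.1 < q.unpair.2.unpair.1 then 0 else 1
  have H : ∀ a, ∃ m, test (Nat.pair a m) = 0 := fun a => by
    obtain ⟨m, hm, ha⟩ := exists_mem_lt_unpair_fst_of_subset_initSegs hC hinf a
    exact ⟨m, by simp [test, O, hm, ha]⟩
  have hdecode : ∀ a, X.indicator 1 a = (Nat.find (H a)).unpair.2 / 2 ^ a % 2 := fun a => by
    obtain ⟨hmem, ha⟩ : O (Nat.find (H a)) = 1 ∧ a < (Nat.find (H a)).unpair.1 := by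
      simpa [test] using Nat.find_spec (H a)
    refine indicator_eq_of_mem_initSegs (hC ?_) ha
    by_contra hm
    simp [O, hm] at hmem
  have htest : Primrec₂ fun (q b : ℕ) =>
      if b = 1 ∧ q.unpair.1 < q.unpair.2.unpair.1 then 0 else 1 :=
    Primrec.ite (PrimrecPred.and (Primrec.eq.comp Primrec.snd (Primrec.const 1))
      (Primrec.nat_lt.comp (Primrec.fst.comp (Primrec.unpair.comp Primrec.fst))
        (Primrec.fst.comp (Primrec.unpair.comp
          (Primrec.snd.comp (Primrec.unpair.comp Primrec.fst))))))
      (Primrec.const 0) (Primrec.const 1)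
  have hbit : Primrec₂ fun (a m : ℕ) => m.unpair.2 / 2 ^ a % 2 :=
    Primrec.nat_mod.comp (Primrec.nat_div.comp
      (Primrec.snd.comp (Primrec.unpair.comp Primrec.snd))
      (Primrec.nat_pow.comp (Primrec.const 2) Primrec.fst)) (Primrec.const 2)
  have htestc : OrComputableIn O test :=
    (OrComputableIn.comp₂ htest (.of_primrec Primrec.id)
      (OrComputableIn.oracle.comp (.of_primrec (Primrec.snd.comp Primrec.unpair))) :)
  change OrComputableIn _ _
  rw [funext hdecode]
  exact (OrComputableIn.comp₂ hbit (.of_primrec Primrec.id) (htestc.find H) :)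

/-- The Immunity Lemma: if `A ≰_T B` then there is an infinite `S ≤_T A` that is
`B`-immune, i.e. no infinite subset of `S` is Turing reducible to `B`. -/
theorem immunity_lemma (A B : ℕ → Bool)
    (h : ¬ SetTuringReducible {n | A n} {n | B n}) :
    ∃ S : Set ℕ, SetTuringReducible S {n | A n} ∧ S.Infinite ∧
      ∀ C : Set ℕ, C ⊆ S → C.Infinite → ¬ SetTuringReducible C {n | B n} :=
  ⟨initSegs {n | A n}, setTuringReducible_initSegs _, initSegs_infinite _,
    fun _ hCS hC hCB => h ((setTuringReducible_of_subset_initSegs hCS hC).trans hCB)⟩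
end

section
/- Let A : ℕ → Bool and let S ⊆ ℕ be the set of codes of the finite initial segments of A, i.e., S = { encode([A(0), A(1), …, A(n−1)]) : n ∈ ℕ } under a fixed computable injective encoding of finite boolean strings into ℕ. Then: (1) S is Turing reducible to A; and (2) for every B : ℕ → Bool, if C ⊆ S is infinite and the characteristic function of C is computable relative to an oracle for B, then A is Turing reducible to B. -/
/-- Partial recursiveness relative to an oracle `O : ℕ → ℕ`: the least class containing
the basic functions and the oracle, closed under pairing, composition, primitive
recursion, and unbounded search.  (This mirrors Mathlib's `Nat.Partrec`, with the extra
`oracle` constructor.) -/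
inductive RecursiveIn' (O : ℕ → ℕ) : (ℕ →. ℕ) → Prop
  | zero : RecursiveIn' O (pure 0)
  | succ : RecursiveIn' O Nat.succ
  | left : RecursiveIn' O ↑fun n : ℕ => n.unpair.1
  | right : RecursiveIn' O ↑fun n : ℕ => n.unpair.2
  | oracle : RecursiveIn' O ↑O
  | pair {f g} : RecursiveIn' O f → RecursiveIn' O g →
      RecursiveIn' O fun n => Nat.pair <$> f n <*> g n
  | comp {f g} : RecursiveIn' O f → RecursiveIn' O g → RecursiveIn' O fun n => g n >>= f
  | prec {f g} : RecursiveIn' O f → RecursiveIn' O g →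
      RecursiveIn' O (Nat.unpaired fun a n =>
        n.rec (f a) fun y IH => do let i ← IH; g (Nat.pair a (Nat.pair y i)))
  | rfind {f} : RecursiveIn' O f →
      RecursiveIn' O fun a => Nat.rfind fun n => (fun m => m = 0) <$> f (Nat.pair a n)

/-- `X` is Turing reducible to `Y` (`X ≤_T Y`): the characteristic function of `X`
(as a total partial function) is recursive in an oracle for the characteristic
function of `Y`. -/
def TuringReducible' (X Y : Set ℕ) : Prop :=
  RecursiveIn' (Y.indicator 1) fun n => Part.some (X.indicator 1 n)

/-!
A prefix code of `A` is computable from `A` by primitive recursion on its length, and `m` codes a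
prefix of `A` iff it equals the code of the prefix of `A` whose length is that of the list coded
by `m`; hence `S ≤_T A`. Conversely, the elements of an infinite `C ⊆ S` code prefixes of
unbounded length, so `A a` can be read off the first element of `C`, found by an unbounded search
using the oracle for `C`, whose list is longer than `a`.
-/

namespace RecursiveIn'

variable {O : ℕ → ℕ}

theorem of_partrec {f : ℕ →. ℕ} (hf : Nat.Partrec f) : RecursiveIn' O f := by
  induction hf with
  | zero => exact .zero
  | succ => exact .succ
  | left => exact .left
  | right => exact .right
  | pair _ _ ihf ihg => exact .pair ihf ihg
  | comp _ _ ihf ihg => exact .comp ihf ihg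
  | prec _ _ ihf ihg => exact .prec ihf ihg
  | rfind _ ihf => exact .rfind ihf

theorem of_eq {f g : ℕ →. ℕ} (hf : RecursiveIn' O f) (h : ∀ n, f n = g n) :
    RecursiveIn' O g :=
  funext h ▸ hf

theorem of_computable {f : ℕ → ℕ} (hf : Computable f) : RecursiveIn' O f :=
  of_partrec (Partrec.nat_iff.1 hf)

theorem comp_total {f g : ℕ → ℕ} (hf : RecursiveIn' O f) (hg : RecursiveIn' O g) :
    RecursiveIn' O (fun n => f (g n) : ℕ → ℕ) :=
  (hf.comp hg).of_eq fun _ => Part.bind_some _ _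

theorem pair_total {f g : ℕ → ℕ} (hf : RecursiveIn' O f) (hg : RecursiveIn' O g) :
    RecursiveIn' O (fun n => Nat.pair (f n) (g n) : ℕ → ℕ) :=
  (hf.pair hg).of_eq fun n => by simp [Seq.seq]

theorem computable₂_comp {F : ℕ → ℕ → ℕ} {g : ℕ → ℕ} (hF : Computable₂ F)
    (hg : RecursiveIn' O g) : RecursiveIn' O (fun n => F n (g n) : ℕ → ℕ) := by
  have hF' : Computable fun q : ℕ => F q.unpair.1 q.unpair.2 :=
    hF.comp (Computable.fst.comp Computable.unpair) (Computable.snd.comp Computable.unpair)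
  simpa using comp_total (of_computable hF') (pair_total (of_computable Computable.id) hg)

theorem of_nat_rec {f : ℕ → ℕ} {g : ℕ → ℕ → ℕ}
    (hg : RecursiveIn' O (Nat.unpaired g : ℕ → ℕ)) (hf : ∀ n, f (n + 1) = g n (f n)) :
    RecursiveIn' O f := by
  have hstep : RecursiveIn' O (fun p => g p.unpair.2.unpair.1 p.unpair.2.unpair.2 : ℕ → ℕ) :=
    comp_total hg (of_computable (Computable.snd.comp Computable.unpair))
  have hrec := (prec (of_computable (Computable.const (f 0))) hstep).comp
    (of_computable (f := fun n => Nat.pair 0 n)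
      (Primrec₂.natPair.comp (Primrec.const 0) Primrec.id).to_comp)
  refine hrec.of_eq fun n => ?_
  simp only [PFun.coe_val, Part.bind_eq_bind, Part.bind_some, Nat.unpaired, Nat.unpair_pair]
  induction n with
  | zero => rfl
  | succ n ih => simp only [ih, Part.bind_some, hf]

/-- `Nat.rfind` searches for a zero, so `0` plays the role of "true" in `hP`. -/
theorem rfind_total {P : ℕ → ℕ → Prop} [∀ a n, Decidable (P a n)]
    (hP : RecursiveIn' O (fun q : ℕ => if P q.unpair.1 q.unpair.2 then 0 else 1 : ℕ → ℕ))
    (H : ∀ a, ∃ n, P a n) : RecursiveIn' O (fun a => Nat.find (H a) : ℕ → ℕ) := by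
  refine hP.rfind.of_eq fun a => ?_
  show _ = Part.some (Nat.find (H a))
  refine Part.eq_some_iff.2 (Nat.mem_rfind.2 ⟨?_, fun hm => ?_⟩)
  · simp [Nat.find_spec (H a)]
  · simp [Nat.find_min _ hm]

end RecursiveIn'

open Encodable Set RecursiveIn'

def decodeBoolList (m : ℕ) : List Bool := (decode m).getD []

theorem decodeBoolList_encode (l : List Bool) : decodeBoolList (encode l) = l := by
  simp [decodeBoolList]

theorem primrec_decodeBoolList : Primrec decodeBoolList :=
  Primrec.option_getD.comp Primrec.decode (Primrec.const [])

def prefixCode (A : ℕ → Bool) (n : ℕ) : ℕ := encode (List.ofFn fun i : Fin n => A i)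

section prefixCode

variable (A : ℕ → Bool)

theorem decodeBoolList_prefixCode (n : ℕ) :
    decodeBoolList (prefixCode A n) = List.ofFn fun i : Fin n => A i :=
  decodeBoolList_encode _

theorem length_decodeBoolList_prefixCode (n : ℕ) :
    (decodeBoolList (prefixCode A n)).length = n := by
  simp [decodeBoolList_prefixCode]

theorem getD_decodeBoolList_prefixCode {a n : ℕ} (h : a < n) :
    (decodeBoolList (prefixCode A n)).getD a false = A a := by
  simp [decodeBoolList_prefixCode, h]

theorem prefixCode_succ (n : ℕ) :
    prefixCode A (n + 1) = encode (decodeBoolList (prefixCode A n) ++ [A n]) := by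
  rw [decodeBoolList_prefixCode, prefixCode, List.ofFn_succ', List.concat_eq_append]
  rfl

theorem mem_range_prefixCode_iff {m : ℕ} :
    m ∈ range (prefixCode A) ↔ prefixCode A (decodeBoolList m).length = m := by
  refine ⟨?_, fun h => ⟨_, h⟩⟩
  rintro ⟨n, rfl⟩
  rw [length_decodeBoolList_prefixCode]

theorem indicator_setOf_apply (n : ℕ) : ({n | A n} : Set ℕ).indicator 1 n = (A n).toNat := by
  cases h : A n <;> simp [h]

theorem recursiveIn_prefixCode :
    RecursiveIn' (({n | A n} : Set ℕ).indicator 1) (prefixCode A) := by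
  refine of_nat_rec (g := fun y c => encode (decodeBoolList c ++ [A y])) ?_ (prefixCode_succ A)
  have hF : Computable₂ fun (q b : ℕ) => encode (decodeBoolList q.unpair.2 ++ [b == 1]) :=
    (Primrec.encode.comp <| Primrec.list_concat.comp
      (primrec_decodeBoolList.comp <| Primrec.snd.comp <| Primrec.unpair.comp Primrec.fst)
      (Primrec.beq.comp Primrec.snd (Primrec.const 1))).to_comp
  refine (computable₂_comp hF (comp_total oracle
    (of_computable (Computable.fst.comp Computable.unpair)))).of_eq fun q => ?_
  simp [indicator_setOf_apply]

theorem turingReducible_range_prefixCode : TuringReducible' (range (prefixCode A)) {n | A n} := by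
  classical
  have hF : Computable₂ fun (m c : ℕ) => if c = m then 1 else 0 :=
    (Primrec.ite (Primrec.eq.comp Primrec.snd Primrec.fst) (Primrec.const 1)
      (Primrec.const 0)).to_comp
  have hlen : Computable fun m => (decodeBoolList m).length :=
    (Primrec.list_length.comp primrec_decodeBoolList).to_comp
  refine (computable₂_comp hF (comp_total (recursiveIn_prefixCode A)
    (of_computable hlen))).of_eq fun m => ?_
  simp only [PFun.coe_val, Set.indicator_apply, mem_range_prefixCode_iff, Pi.one_apply]

theorem exists_mem_lt_length_decodeBoolList {C : Set ℕ} (hCS : C ⊆ range (prefixCode A))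
    (hC : C.Infinite) (a : ℕ) : ∃ m, m ∈ C ∧ a < (decodeBoolList m).length := by
  by_contra! h
  refine hC (((finite_Iic a).image (prefixCode A)).subset fun m hm => ?_)
  obtain ⟨n, rfl⟩ := hCS hm
  exact ⟨n, by simpa [length_decodeBoolList_prefixCode] using h _ hm, rfl⟩

theorem turingReducible_of_infinite_subset_range_prefixCode {C Y : Set ℕ}
    (hCS : C ⊆ range (prefixCode A)) (hC : C.Infinite) (hCY : TuringReducible' C Y) :
    TuringReducible' {n | A n} Y := by
  classical
  have H := exists_mem_lt_length_decodeBoolList A hCS hC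
  have hF : Computable₂ fun (q c : ℕ) =>
      if c = 1 ∧ q.unpair.1 < (decodeBoolList q.unpair.2).length then 0 else 1 :=
    (Primrec.ite ((Primrec.eq.comp Primrec.snd (Primrec.const 1)).and
      (Primrec.nat_lt.comp (Primrec.fst.comp <| Primrec.unpair.comp Primrec.fst)
        (Primrec.list_length.comp <| primrec_decodeBoolList.comp <|
          Primrec.snd.comp <| Primrec.unpair.comp Primrec.fst)))
      (Primrec.const 0) (Primrec.const 1)).to_comp
  have hsearch : RecursiveIn' (Y.indicator 1) (fun a => Nat.find (H a) : ℕ → ℕ) := by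
    refine rfind_total ((computable₂_comp hF (comp_total hCY
      (of_computable (Computable.snd.comp Computable.unpair)))).of_eq fun q => ?_) H
    simp [Set.indicator_apply]
  have hG : Computable₂ fun (a m : ℕ) => ((decodeBoolList m).getD a false).toNat :=
    ((Primrec.cond ((Primrec.list_getD false).comp
      (primrec_decodeBoolList.comp Primrec.snd) Primrec.fst) (Primrec.const 1)
      (Primrec.const 0)).of_eq fun _ => rfl).to_comp
  refine (computable₂_comp hG hsearch).of_eq fun a => ?_
  obtain ⟨hmC, hlt⟩ := Nat.find_spec (H a)
  obtain ⟨n, hn⟩ := hCS hmC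
  simp only [PFun.coe_val, indicator_setOf_apply]
  rw [← hn] at hlt ⊢
  rw [getD_decodeBoolList_prefixCode A (by rwa [length_decodeBoolList_prefixCode] at hlt)]

end prefixCode

/-- The content of the proof of the Immunity Lemma: let `S` be the set of codes of
finite initial segments of `A` (under the standard computable injective encoding of
`List Bool` into `ℕ`). Then (1) `S ≤_T A`, and (2) any infinite `C ⊆ S` with
`C ≤_T B` yields `A ≤_T B`. -/
theorem immunity_lemma_proof (A : ℕ → Bool) (S : Set ℕ)
    (hS : S = {m | ∃ n : ℕ, m = Encodable.encode (List.ofFn fun i : Fin n => A i)}) :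
    TuringReducible' S {n | A n} ∧
      ∀ B : ℕ → Bool, ∀ C : Set ℕ, C ⊆ S → C.Infinite →
        TuringReducible' C {n | B n} → TuringReducible' {n | A n} {n | B n} := by
  obtain rfl : S = range (prefixCode A) := hS.trans <| by ext; simp [prefixCode, eq_comm]
  exact ⟨turingReducible_range_prefixCode A, fun _ _ hCS hC hCB =>
    turingReducible_of_infinite_subset_range_prefixCode A hCS hC hCB⟩
end

section
/- Let C ⊆ ℕ be infinite and cohesive, meaning that for every computably enumerable set W ⊆ ℕ, at least one of C ∩ W and C ∩ (ℕ \ W) is finite. Assume moreover that the complement ℕ \ C is not computably enumerable. Then C is Π⁰₁-immune: for every computably enumerable set W ⊆ ℕ, if ℕ \ W ⊆ C then ℕ \ W is finite. -/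
/-!
If `C ∩ W` were finite, then `Cᶜ` would be the c.e. set `W` with finitely many points removed,
contradicting that `Cᶜ` is not c.e.; so cohesiveness leaves `C ∩ Wᶜ = Wᶜ` finite.
-/

theorem Finset.primrecPred_mem {α : Type*} [Primcodable α] [DecidableEq α] (s : Finset α) :
    PrimrecPred (· ∈ s) :=
  ((PrimrecRel.exists_mem_list Primrec.eq).comp (Primrec.const s.toList) Primrec.id).of_eq
    fun a => by simp

theorem REPred.and {α : Type*} [Primcodable α] {p q : α → Prop} (hp : REPred p) (hq : REPred q) :
    REPred fun a => p a ∧ q a :=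
  (Partrec.dom_re <| hp.bind (hq.comp Computable.fst).to₂).of_eq fun a => by simp [Part.assert]

theorem REPred.diff_finite {α : Type*} [Primcodable α] {W s : Set α} (hW : REPred (· ∈ W))
    (hs : s.Finite) : REPred (· ∈ W \ s) := by
  classical
  exact hW.and (hs.toFinset.primrecPred_mem.computablePred.not.to_re.of_eq fun a => by simp)

theorem REPred.of_subset_of_finite_diff {α : Type*} [Primcodable α] {W D : Set α}
    (hW : REPred (· ∈ W)) (hDW : D ⊆ W) (hfin : (W \ D).Finite) : REPred (· ∈ D) :=
  Set.sdiff_sdiff_cancel_left hDW ▸ hW.diff_finite hfin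

theorem cohesive_pi01_immune_general (C : Set ℕ)
    (hcoh : ∀ W : Set ℕ, REPred (· ∈ W) → (C ∩ W).Finite ∨ (C ∩ Wᶜ).Finite)
    (hnotce : ¬ REPred (· ∈ Cᶜ)) :
    ∀ W : Set ℕ, REPred (· ∈ W) → Wᶜ ⊆ C → Wᶜ.Finite := by
  intro W hW hWC
  rcases hcoh W hW with hfin | hfin
  · have hCc : Cᶜ ⊆ W := Set.compl_subset_comm.mp hWC
    rw [Set.inter_comm, ← Set.sdiff_compl] at hfin
    exact absurd (hW.of_subset_of_finite_diff hCc hfin) hnotce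
  · rwa [Set.inter_eq_right.mpr hWC] at hfin

/-- If `C` is infinite and cohesive (for every c.e. `W`, one of `C ∩ W`, `C ∩ Wᶜ` is
finite), and the complement of `C` is not c.e., then `C` is `Π⁰₁`-immune: every
co-c.e. subset of `C` is finite. -/
theorem cohesive_pi01_immune (C : Set ℕ) (hinf : C.Infinite)
    (hcoh : ∀ W : Set ℕ, REPred (· ∈ W) → (C ∩ W).Finite ∨ (C ∩ Wᶜ).Finite)
    (hnotce : ¬ REPred (· ∈ Cᶜ)) :
    ∀ W : Set ℕ, REPred (· ∈ W) → Wᶜ ⊆ C → Wᶜ.Finite :=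
  cohesive_pi01_immune_general C hcoh hnotce
end

section
/- There exists a set S ⊆ ℕ such that: (1) S is infinite; (2) S is limit computable, i.e., there is a computable function g : ℕ → ℕ → Bool such that for every n, the sequence s ↦ g n s is eventually constant and its eventual value is true if and only if n ∈ S (equivalently, S is Δ⁰₂); and (3) S is Π⁰₁-immune, i.e., for every computably enumerable set W ⊆ ℕ, if ℕ \ W ⊆ S then ℕ \ W is finite. -/
open Filter

namespace D2Immune

open Nat.Partrec Nat.Partrec.Code

open scoped Classical

open scoped Classical in
noncomputable def cod (e : ℕ) : Nat.Partrec.Code := Denumerable.ofNat _ e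

/-- halting predicate -/
def H (e n : ℕ) : Prop := (Nat.Partrec.Code.eval (cod e) n).Dom

def D (e n : ℕ) : Prop := 2 ^ e ≤ n ∧ ¬ H e n ∧ ∀ n', 2 ^ e ≤ n' → n' < n → H e n'

def S : Set ℕ := {n | ∀ e, ¬ D e n}

noncomputable def inner (e s n' : ℕ) : Bool :=
  decide (n' < 2 ^ e) || (Nat.Partrec.Code.evaln s (cod e) n').isSome

noncomputable def A (e n s : ℕ) : Bool :=
  !(Nat.Partrec.Code.evaln s (cod e) n).isSome && decide (2 ^ e ≤ n) &&
    decide (∀ n' < n, inner e s n' = true)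

noncomputable def g (n s : ℕ) : Bool := decide (∀ e < n + 1, A e n s = false)

lemma halt_iff (e n : ℕ) : H e n ↔ ∃ s, (evaln s (cod e) n).isSome := by
  constructor
  · intro h
    obtain ⟨x, hx⟩ := Part.dom_iff_mem.1 h
    obtain ⟨s, hs⟩ := evaln_complete.1 hx
    exact ⟨s, by simp [Option.isSome_iff_exists]; exact ⟨x, hs⟩⟩
  · rintro ⟨s, hs⟩
    rw [Option.isSome_iff_exists] at hs
    obtain ⟨x, hx⟩ := hs
    exact Part.dom_iff_mem.2 ⟨x, evaln_sound hx⟩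

lemma evaln_none (e n : ℕ) (h : ¬ H e n) (s : ℕ) : evaln s (cod e) n = Option.none := by
  by_contra hne
  exact h ((halt_iff e n).2 ⟨s, Option.isSome_iff_ne_none.2 hne⟩)

lemma isSome_mono {e n s t : ℕ} (hst : s ≤ t) (h : (evaln s (cod e) n).isSome) :
    (evaln t (cod e) n).isSome := by
  rw [Option.isSome_iff_exists] at h ⊢
  obtain ⟨x, hx⟩ := h
  exact ⟨x, evaln_mono hst hx⟩

lemma A_eventually (e n : ℕ) : ∀ᶠ s in atTop, A e n s = decide (D e n) := by
  by_cases hH : H e n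
  · obtain ⟨s0, hs0⟩ := (halt_iff e n).1 hH
    filter_upwards [eventually_ge_atTop s0] with s hs
    have h1 : (evaln s (cod e) n).isSome := isSome_mono hs hs0
    have h2 : ¬ D e n := fun hD => hD.2.1 hH
    simp [A, h2, Option.isNone_iff_eq_none, Option.isSome_iff_ne_none.1 h1]
  · have hnone := evaln_none e n hH
    by_cases hle : 2 ^ e ≤ n
    · by_cases hall : ∀ n', 2 ^ e ≤ n' → n' < n → H e n'
      · have hD : D e n := ⟨hle, hH, hall⟩
        have hev : ∀ᶠ s in atTop, ∀ n' ∈ Finset.range n, inner e s n' = true := by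
          rw [Finset.eventually_all]
          intro n' hn'
          rw [Finset.mem_range] at hn'
          by_cases h2 : n' < 2 ^ e
          · exact Eventually.of_forall fun s => by simp [inner, h2]
          · obtain ⟨s0, hs0⟩ := (halt_iff e n').1 (hall n' (le_of_not_gt h2) hn')
            filter_upwards [eventually_ge_atTop s0] with s hs
            simp [inner, isSome_mono hs hs0]
        filter_upwards [hev] with s hs
        have : ∀ n' < n, inner e s n' = true := fun n' h => hs n' (Finset.mem_range.2 h)
        simp [A, hnone, hle, hD]
        exact this
      · push_neg at hall
        obtain ⟨n', hn'1, hn'2, hn'3⟩ := hall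
        have h2 : ¬ n' < 2 ^ e := not_lt.2 hn'1
        have hD : ¬ D e n := fun hD => hn'3 (hD.2.2 n' hn'1 hn'2)
        refine Eventually.of_forall fun s => ?_
        have : inner e s n' = false := by
          simp [inner, h2, evaln_none e n' hn'3 s]
        have h3 : ¬ ∀ m < n, inner e s m = true := fun h => by
          simpa [this] using h n' hn'2
        simp [A, h3, hD]
    · have hD : ¬ D e n := fun hD => hle hD.1
      exact Eventually.of_forall fun s => by simp [A, hle, hD]

lemma g_eventually (n : ℕ) : ∀ᶠ s in atTop, g n s = decide (n ∈ S) := by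
  have hev : ∀ᶠ s in atTop, ∀ e ∈ Finset.range (n + 1), A e n s = decide (D e n) := by
    rw [Finset.eventually_all]
    exact fun e _ => A_eventually e n
  filter_upwards [hev] with s hs
  have h1 : (∀ e < n + 1, A e n s = false) ↔ (∀ e < n + 1, ¬ D e n) := by
    constructor
    · intro h e he
      have := h e he
      rw [hs e (Finset.mem_range.2 he)] at this
      simpa using this
    · intro h e he
      rw [hs e (Finset.mem_range.2 he)]
      simpa using h e he
  have h2 : (∀ e < n + 1, ¬ D e n) ↔ n ∈ S := by
    constructor
    · intro h e hD
      exact h e (Nat.lt_succ_of_lt (lt_of_lt_of_le (Nat.lt_two_pow_self (n := e)) hD.1)) hD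
    · intro h e _
      exact h e
  simp only [g, S]
  exact Bool.decide_congr (h1.trans h2)

lemma D_unique {e n m : ℕ} (hn : D e n) (hm : D e m) : n = m := by
  rcases lt_trichotomy n m with h | h | h
  · exact absurd (hm.2.2 n hn.1 h) hn.2.1
  · exact h
  · exact absurd (hn.2.2 m hm.1 h) hm.2.1

open scoped Classical in
noncomputable def F (n : ℕ) : ℕ := if h : ∃ e, D e n then h.choose else 0

lemma F_spec {n : ℕ} (h : n ∉ S) : D (F n) n := by
  have hex : ∃ e, D e n := by
    by_contra hc
    push_neg at hc
    exact h hc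
  rw [F, dif_pos hex]
  exact hex.choose_spec

lemma S_infinite : S.Infinite := by
  by_contra hfin
  rw [Set.not_infinite] at hfin
  obtain ⟨N, hN⟩ := hfin.bddAbove
  have hNS : ∀ n, N < n → n ∉ S := fun n hn hS => absurd (hN hS) (not_le.2 hn)
  have hcard : (Finset.Ico (N + 1) (2 ^ (N + 2))).card ≤ (Finset.range (N + 2)).card := by
    apply Finset.card_le_card_of_injOn F
    · intro n hn
      rw [Finset.mem_coe, Finset.mem_Ico] at hn
      have hD := F_spec (hNS n (Nat.lt_of_succ_le hn.1))
      rw [Finset.mem_coe, Finset.mem_range]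
      exact (Nat.pow_lt_pow_iff_right (by norm_num)).1 (lt_of_le_of_lt hD.1 hn.2)
    · intro n hn m hm hFnm
      rw [Finset.coe_Ico, Set.mem_Ico] at hn hm
      have hDn := F_spec (hNS n (Nat.lt_of_succ_le hn.1))
      have hDm := F_spec (hNS m (Nat.lt_of_succ_le hm.1))
      rw [hFnm] at hDn
      exact D_unique hDn hDm
  rw [Nat.card_Ico, Finset.card_range] at hcard
  have := Nat.lt_two_pow_self (n := N + 1)
  have h2 : 2 ^ (N + 2) = 2 * 2 ^ (N + 1) := by ring
  omega

lemma foldr_all {α : Type*} (p : α → ℕ → Bool) (a : α) :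
    ∀ l : List ℕ, (l.foldr (fun b s => p a b && s) true) = decide (∀ i ∈ l, p a i = true)
  | [] => by simp
  | b :: l => by
    simp [foldr_all p a l, List.forall_mem_cons, Bool.decide_and]

lemma primrec_ball {α : Type*} [Primcodable α] {p : α → ℕ → Bool} {f : α → ℕ}
    (hp : Primrec₂ p) (hf : Primrec f) :
    Primrec fun a => decide (∀ i < f a, p a i = true) := by
  have hh : Primrec₂ fun (a : α) (bs : ℕ × Bool) => p a bs.1 && bs.2 :=
    Primrec.and.comp (hp.comp Primrec.fst (Primrec.fst.comp Primrec.snd))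
      (Primrec.snd.comp Primrec.snd)
  have h := Primrec.list_foldr (Primrec.list_range.comp hf) (Primrec.const true) hh
  refine h.of_eq fun a => ?_
  rw [foldr_all]
  exact Bool.decide_congr (by simp)

set_option maxHeartbeats 2000000 in
lemma computable_g : Computable₂ g := by
  have hpow : Primrec₂ (fun a b : ℕ => a ^ b) := Primrec₂.unpaired'.1 Nat.Primrec.pow
  have hcod : Primrec cod := Primrec.ofNat _
  have hEv : Primrec fun (x : (ℕ × ℕ) × ℕ) => evaln x.1.2 (cod x.1.1) x.2 :=
    primrec_evaln.comp
      (((Primrec.snd.comp Primrec.fst).pair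
        (hcod.comp (Primrec.fst.comp Primrec.fst))).pair Primrec.snd)
  -- inner as a primrec function of ((e, s), n')
  have hinner : Primrec fun (x : (ℕ × ℕ) × ℕ) => inner x.1.1 x.1.2 x.2 :=
    Primrec.or.comp
      (Primrec.nat_lt.comp Primrec.snd
        (hpow.comp (Primrec.const 2) (Primrec.fst.comp Primrec.fst))).decide
      (Primrec.option_isSome.comp hEv)
  -- A as a primrec function of ((n, s), e)
  have hA : Primrec fun (x : (ℕ × ℕ) × ℕ) => A x.2 x.1.1 x.1.2 := by
    have h1 : Primrec fun (x : (ℕ × ℕ) × ℕ) => !(evaln x.1.2 (cod x.2) x.1.1).isSome :=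
      Primrec.not.comp (Primrec.option_isSome.comp
        (hEv.comp ((Primrec.snd.pair (Primrec.snd.comp Primrec.fst)).pair
          (Primrec.fst.comp Primrec.fst))))
    have h2 : Primrec fun (x : (ℕ × ℕ) × ℕ) => decide (2 ^ x.2 ≤ x.1.1) :=
      Primrec.nat_le.comp (hpow.comp (Primrec.const 2) Primrec.snd)
        (Primrec.fst.comp Primrec.fst) |>.decide
    have h3 : Primrec fun (x : (ℕ × ℕ) × ℕ) =>
        decide (∀ n' < x.1.1, inner x.2 x.1.2 n' = true) := by
      have hp : Primrec₂ fun (x : (ℕ × ℕ) × ℕ) (n' : ℕ) => inner x.2 x.1.2 n' :=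
        (hinner.comp (((Primrec.snd.comp Primrec.fst).pair
          (Primrec.snd.comp (Primrec.fst.comp Primrec.fst))).pair
            Primrec.snd)).to₂
      exact primrec_ball hp (Primrec.fst.comp Primrec.fst)
    exact Primrec.and.comp (Primrec.and.comp h1 h2) h3
  have hg : Primrec fun (ns : ℕ × ℕ) => decide (∀ e < ns.1 + 1, (!A e ns.1 ns.2) = true) := by
    have hp : Primrec₂ fun (ns : ℕ × ℕ) (e : ℕ) => !A e ns.1 ns.2 :=
      (Primrec.not.comp (hA.comp ((Primrec.fst.pair Primrec.snd).comp
        Primrec.fst |>.pair Primrec.snd))).to₂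
    exact primrec_ball hp (Primrec.succ.comp Primrec.fst)
  have hg' : Primrec fun (ns : ℕ × ℕ) => g ns.1 ns.2 :=
    hg.of_eq fun ns => Bool.decide_congr (by simp [g, Bool.not_eq_true'])
  exact hg'.to_comp.to₂

lemma immune (W : Set ℕ) (hW : REPred (· ∈ W)) (hsub : Wᶜ ⊆ S) : Wᶜ.Finite := by
  by_contra hfin
  have hinf : Wᶜ.Infinite := hfin
  have h1 : Partrec fun a : ℕ => (Part.assert (a ∈ W) fun _ => Part.some ()).map
      fun _ : Unit => (0 : ℕ) :=
    hW.map ((Computable.const 0).to₂ : Computable₂ fun (_ : ℕ) (_ : Unit) => (0 : ℕ))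
  obtain ⟨c, hc⟩ := exists_code.1 (Partrec.nat_iff.1 h1)
  set e := Encodable.encode c with he
  have hcod : cod e = c := Denumerable.ofNat_encode c
  have hHW : ∀ n, H e n ↔ n ∈ W := by
    intro n
    rw [H, hcod, hc]
    simp [Part.assert]
  have hex : ∃ n, 2 ^ e ≤ n ∧ n ∉ W := by
    obtain ⟨m0, hm0, hgt⟩ := hinf.exists_gt (2 ^ e)
    exact ⟨m0, hgt.le, hm0⟩
  have hm := Nat.find_spec hex
  have hD : D e (Nat.find hex) := by
    refine ⟨hm.1, fun h => hm.2 ((hHW _).1 h), fun n' hn1 hn2 => ?_⟩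
    by_contra hne
    exact Nat.find_min hex hn2 ⟨hn1, fun hw => hne ((hHW n').2 hw)⟩
  exact (hsub hm.2) e hD

end D2Immune

open scoped Classical in
/-- There is an infinite, limit computable (i.e. `Δ⁰₂`) set `S` that is `Π⁰₁`-immune:
every co-c.e. subset of `S` is finite. -/
theorem exists_delta2_pi01_immune :
    ∃ S : Set ℕ,
      S.Infinite ∧
      (∃ g : ℕ → ℕ → Bool, Computable₂ g ∧
        ∀ n : ℕ, ∃ b : Bool, (∀ᶠ s in atTop, g n s = b) ∧ (b = true ↔ n ∈ S)) ∧
      (∀ W : Set ℕ, REPred (· ∈ W) → Wᶜ ⊆ S → Wᶜ.Finite) := by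
  refine ⟨D2Immune.S, D2Immune.S_infinite,
    ⟨D2Immune.g, D2Immune.computable_g, fun n => ?_⟩, D2Immune.immune⟩
  exact ⟨decide (n ∈ D2Immune.S), D2Immune.g_eventually n, by simp⟩
end
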